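/- The binary matroids E_4 and E_5 are self-dual; that is, E_4 is isomorphic to its dual E_4* and E_5 is isomorphic to its dual E_5*. -/

import Mathlib

open Set Matroid

namespace PaperMatroid

variable {α : Type*} {β : Type*}

/-! ### A linear-algebraic augmentation lemma, used to construct vector matroids -/

theorem aug_lemma {F : Type} [Field F] {n : ℕ} {γ : Type*} [Fintype γ]
    (φ : γ → (Fin n → F)) {I J : Set γ}
    (hI : LinearIndependent F (I.restrict φ)) (hJ : LinearIndependent F (J.restrict φ))
    (hIJ : I.ncard < J.ncard) :
    ∃ e ∈ J, e ∉ I ∧ LinearIndependent F ((insert e I).restrict φ) := by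
  classical
  by_contra h
  push_neg at h
  have hspan : ∀ e ∈ J, φ e ∈ Submodule.span F (φ '' I) := by
    intro e he
    by_cases heI : e ∈ I
    · exact Submodule.subset_span ⟨e, heI, rfl⟩
    by_contra hnot
    exact h e he heI ((linearIndepOn_insert heI).2 ⟨hI, hnot⟩)
  have hle : Submodule.span F (φ '' J) ≤ Submodule.span F (φ '' I) := by
    rw [Submodule.span_le]
    rintro - ⟨e, he, rfl⟩
    exact hspan e he
  have hinjI : Set.InjOn φ I := by
    rw [Set.injOn_iff_injective]; exact hI.injective
  have hinjJ : Set.InjOn φ J := by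
    rw [Set.injOn_iff_injective]; exact hJ.injective
  haveI : Fintype ↥(φ '' I) := Fintype.ofFinite _
  haveI : Fintype ↥(φ '' J) := Fintype.ofFinite _
  have hrI : Module.finrank F (Submodule.span F (φ '' I)) = (φ '' I).toFinset.card :=
    finrank_span_set_eq_card (show LinearIndepOn F φ I from hI).id_image
  have hrJ : Module.finrank F (Submodule.span F (φ '' J)) = (φ '' J).toFinset.card :=
    finrank_span_set_eq_card (show LinearIndepOn F φ J from hJ).id_image
  have hmono := Submodule.finrank_mono hle
  rw [hrI, hrJ] at hmono
  rw [← Set.ncard_eq_toFinset_card', ← Set.ncard_eq_toFinset_card'] at hmono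
  rw [Set.ncard_image_of_injOn hinjJ, Set.ncard_image_of_injOn hinjI] at hmono
  omega

/-- The `F`-linear vector matroid on `Fin m` whose element `j` is the vector `φ j`. -/
noncomputable def vecMatroid {F : Type} [Field F] {n m : ℕ} (φ : Fin m → (Fin n → F)) :
    Matroid (Fin m) :=
  (IndepMatroid.ofFinite (Set.finite_univ)
    (fun I => LinearIndependent F (I.restrict φ))
    (linearIndependent_empty_type)
    (fun _ _ hJ hIJ => hJ.comp (Set.inclusion hIJ) (Set.inclusion_injective hIJ))
    (fun _ _ hI hJ hcard => aug_lemma φ hI hJ hcard)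
    (fun I _ => Set.subset_univ I)).matroid

/-- The vector matroid `M[A]` of a matrix `A` over GF(2): the ground set is the set of
column indices, and a set is independent iff the corresponding columns are linearly
independent over GF(2). -/
noncomputable def mOf {r m : ℕ} (A : Matrix (Fin r) (Fin m) (ZMod 2)) : Matroid (Fin m) :=
  vecMatroid (fun j i => A i j)

/-- The vector matroid obtained from the matrix `A` by appending the column `v`. -/
noncomputable def extByCol {r m : ℕ} (A : Matrix (Fin r) (Fin m) (ZMod 2))
    (v : Fin r → ZMod 2) : Matroid (Fin (m + 1)) :=
  vecMatroid (Fin.snoc (fun j i => A i j) v)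

/-! ### Minors and isomorphism -/

/-- `M ＼ D`: delete the set `D` from `M`. -/
def deleteSet (M : Matroid α) (D : Set α) : Matroid α := M ↾ (M.E \ D)

/-- `M / C`: contract the set `C` in `M`, defined by duality `M / C = (M✶ ＼ C)✶`. -/
def contractSet (M : Matroid α) (C : Set α) : Matroid α := (deleteSet (M✶) C)✶

/-- `N` is a minor of `M` if it is obtained from `M` by a contraction followed by a
deletion (this includes `N = M`). -/
def IsMinor (N M : Matroid α) : Prop := ∃ C D : Set α, N = deleteSet (contractSet M C) D

/-- An isomorphism from `M` to `N` is a bijection between the ground sets preserving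
independence in both directions. -/
def IsIso (M : Matroid α) (N : Matroid β) : Prop :=
  ∃ e : α → β, Set.BijOn e M.E N.E ∧ ∀ I ⊆ M.E, (M.Indep I ↔ N.Indep (e '' I))

/-- `M` has a minor isomorphic to `N`. -/
def HasIsoMinor (M : Matroid α) (N : Matroid β) : Prop :=
  ∃ M' : Matroid α, IsMinor M' M ∧ IsIso M' N

/-! ### Rank, connectivity and separations -/

/-- The rank of a set `X` in a matroid `M`: the supremum of the cardinalities of
independent subsets of `X` (for finite matroids this is the usual rank function). -/
noncomputable def rk (M : Matroid α) (X : Set α) : ℕ :=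
  sSup (Set.ncard '' {I | M.Indep I ∧ I ⊆ X})

/-- The connectivity function `λ_M(X) = r(X) + r(E − X) − r(M)`, valued in `ℤ`. -/
noncomputable def lam (M : Matroid α) (X : Set α) : ℤ :=
  (rk M X : ℤ) + (rk M (M.E \ X) : ℤ) - (rk M M.E : ℤ)

/-- `(A, B)` is a `k`-separation of `M`. -/
def IsKSep (M : Matroid α) (k : ℕ) (A B : Set α) : Prop :=
  A ∪ B = M.E ∧ Disjoint A B ∧ k ≤ A.ncard ∧ k ≤ B.ncard ∧ lam M A ≤ (k : ℤ) - 1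

/-- `(A, B)` is an exact `k`-separation of `M`. -/
def IsExactKSep (M : Matroid α) (k : ℕ) (A B : Set α) : Prop :=
  A ∪ B = M.E ∧ Disjoint A B ∧ k ≤ A.ncard ∧ k ≤ B.ncard ∧ lam M A = (k : ℤ) - 1

/-- `(A, B)` is a non-minimal exact `k`-separation of `M`. -/
def IsNonMinimalExactKSep (M : Matroid α) (k : ℕ) (A B : Set α) : Prop :=
  IsExactKSep M k A B ∧ k < A.ncard ∧ k < B.ncard

/-- A matroid is `n`-connected (`n ≥ 2`) if it has no `k`-separation for any `k ≤ n − 1`. -/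
def NConnected (M : Matroid α) (n : ℕ) : Prop :=
  2 ≤ n ∧ ∀ k, 1 ≤ k → k ≤ n - 1 → ∀ A B : Set α, ¬ IsKSep M k A B

/-- A matroid is internally 4-connected if it is 3-connected and has no non-minimal
exact 3-separation. -/
def InternallyFourConnected (M : Matroid α) : Prop :=
  NConnected M 3 ∧ ∀ A B : Set α, ¬ IsNonMinimalExactKSep M 3 A B

/-! ### Circuits and simplicity -/

/-- A circuit is a minimal dependent set. -/
def IsCircuit (M : Matroid α) (C : Set α) : Prop :=
  C ⊆ M.E ∧ ¬ M.Indep C ∧ ∀ C' : Set α, C' ⊂ C → M.Indep C'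

/-- A cocircuit of `M` is a circuit of the dual `M✶`. -/
def IsCocircuit (M : Matroid α) (C : Set α) : Prop := IsCircuit M✶ C

/-- A triangle is a 3-element circuit. -/
def IsTriangle (M : Matroid α) (C : Set α) : Prop := IsCircuit M C ∧ C.ncard = 3

/-- A triad is a 3-element cocircuit. -/
def IsTriad (M : Matroid α) (C : Set α) : Prop := IsCocircuit M C ∧ C.ncard = 3

/-- `X` is a union of circuits of `M`. -/
def IsUnionOfCircuits (M : Matroid α) (X : Set α) : Prop :=
  ∃ S : Set (Set α), (∀ C ∈ S, IsCircuit M C) ∧ X = ⋃₀ S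

/-- `X` is a union of cocircuits of `M`. -/
def IsUnionOfCocircuits (M : Matroid α) (X : Set α) : Prop :=
  ∃ S : Set (Set α), (∀ C ∈ S, IsCocircuit M C) ∧ X = ⋃₀ S

/-- A matroid is simple if every circuit has at least 3 elements (equivalently, it has
no loops and no parallel pairs). -/
def Simple (M : Matroid α) : Prop := ∀ C : Set α, IsCircuit M C → 3 ≤ C.ncard

/-- A matroid is cosimple if its dual is simple. -/
def Cosimple (M : Matroid α) : Prop := Simple M✶

/-! ### Extensions and coextensions -/

/-- `M` is a single-element extension of `N` by the element `e`, i.e. `M ＼ e = N`. -/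
def IsSingleExt (M : Matroid α) (e : α) (N : Matroid α) : Prop :=
  e ∈ M.E ∧ deleteSet M {e} = N

/-- `M` is a single-element coextension of `N` by the element `f`, i.e. `M / f = N`. -/
def IsSingleCoext (M : Matroid α) (f : α) (N : Matroid α) : Prop :=
  f ∈ M.E ∧ contractSet M {f} = N

/-! ### Representability -/

/-- `M` is represented over the field `F` by the vector family `φ`. -/
def IsRepBy (M : Matroid α) (F : Type) [Field F] {n : ℕ} (φ : α → (Fin n → F)) : Prop :=
  ∀ I : Set α, M.Indep I ↔ (I ⊆ M.E ∧ LinearIndependent F (I.restrict φ))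

/-- `M` is representable over the field `F`. -/
def RepOver (F : Type) [Field F] (M : Matroid α) : Prop :=
  ∃ (n : ℕ) (φ : α → (Fin n → F)), IsRepBy M F φ

/-- A binary matroid is a matroid representable over GF(2). -/
def Binary (M : Matroid α) : Prop := RepOver (ZMod 2) M

/-- A regular matroid is a matroid representable over every field. -/
def Regular (M : Matroid α) : Prop := ∀ (F : Type) [Field F], RepOver F M

/-! ### 3-decomposers and condition (iii) of the induced-separation theorem -/

/-- `N` (with the non-minimal exact 3-separation `(A,B)` as inducer) is a 3-decomposer
for `M`: `M` has a minor isomorphic to `N` via an isomorphism `φ`, and a non-minimal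
exact 3-separation `(X,Y)` of `M` with `φ(A) ⊆ X` and `φ(B) ⊆ Y`. -/
def IsThreeDecomposer (M : Matroid α) (N : Matroid β) (A B : Set β) : Prop :=
  IsNonMinimalExactKSep N 3 A B ∧
  ∃ (M' : Matroid α) (φ : β → α), IsMinor M' M ∧ Set.BijOn φ N.E M'.E ∧
    (∀ I ⊆ N.E, (N.Indep I ↔ M'.Indep (φ '' I))) ∧
    ∃ X Y : Set α, IsNonMinimalExactKSep M 3 X Y ∧ φ '' A ⊆ X ∧ φ '' B ⊆ Y

/-- Condition (iii) (a)–(d) of the induced-separation theorem, for a matroid `M` obtained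
from a matroid with exact `k`-separation `(A, B)` by an extension by `e` and a
coextension by `f`. -/
def CondIII (M : Matroid α) (e f : α) (k : ℕ) (A : Set α) : Prop :=
  (lam (contractSet M {f}) A = (k : ℤ) - 1 ∧ lam (deleteSet M {e}) A = (k : ℤ) - 1) ∨
  ((lam (contractSet M {f}) A = (k : ℤ) - 1 ∧
      lam (deleteSet M {e}) (insert f A) = (k : ℤ) - 1) →
    (lam M (insert f A) = (k : ℤ) - 1 ∨
      ∃ g ∈ A, IsTriangle M {e, f, g} ∨ IsTriad M {e, f, g})) ∨
  ((lam (contractSet M {f}) (insert e A) = (k : ℤ) - 1 ∧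
      lam (deleteSet M {e}) A = (k : ℤ) - 1) →
    (lam M (insert e A) = (k : ℤ) - 1 ∨
      ∃ g ∈ A, IsTriangle M {e, f, g} ∨ IsTriad M {e, f, g})) ∨
  ((lam (contractSet M {f}) (insert e A) = (k : ℤ) - 1 ∧
      lam (deleteSet M {e}) (insert f A) = (k : ℤ) - 1) →
    ∃ g ∈ A, IsTriangle M {e, f, g} ∨ IsTriad M {e, f, g})

/-! ### The named matroids (columns `1, …, m` of the paper are `0, …, m-1` here) -/

/-- The Fano matroid `F_7 = M[I_3 | D_7]`. -/
noncomputable def F7 : Matroid (Fin 7) :=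
  mOf !![1,0,0,0,1,1,1; 0,1,0,1,0,1,1; 0,0,1,1,1,0,1]

/-- `AG(3,2) = M[I_4 | D_A]`. -/
noncomputable def AG32 : Matroid (Fin 8) :=
  mOf !![1,0,0,0,0,1,1,1; 0,1,0,0,1,0,1,1; 0,0,1,0,1,1,0,1; 0,0,0,1,1,1,1,0]

/-- The matrix `[I_4 | D_8]` representing `S_8`. -/
def S8mat : Matrix (Fin 4) (Fin 8) (ZMod 2) :=
  !![1,0,0,0,0,1,1,1; 0,1,0,0,1,0,1,1; 0,0,1,0,1,1,0,1; 0,0,0,1,1,1,1,1]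

/-- `S_8 = M[I_4 | D_8]`. -/
noncomputable def S8 : Matroid (Fin 8) := mOf S8mat

/-- The matrix `[I_4 | D_9]` representing `P_9`. -/
def P9mat : Matrix (Fin 4) (Fin 9) (ZMod 2) :=
  !![1,0,0,0,0,1,1,1,1; 0,1,0,0,1,0,1,1,1; 0,0,1,0,1,1,0,1,0; 0,0,0,1,1,1,1,1,0]

/-- `P_9 = M[I_4 | D_9]`. -/
noncomputable def P9 : Matroid (Fin 9) := mOf P9mat

/-- `S_10 = M[I_4 | D_10]`. -/
noncomputable def S10 : Matroid (Fin 10) :=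
  mOf !![1,0,0,0,0,1,1,1,1,1; 0,1,0,0,1,0,1,1,1,0; 0,0,1,0,1,1,0,1,0,0; 0,0,0,1,1,1,1,1,0,1]

/-- `E_4 = M[I_5 | D]`. -/
noncomputable def E4 : Matroid (Fin 10) :=
  mOf !![1,0,0,0,0,0,1,1,1,1; 0,1,0,0,0,1,0,1,1,1; 0,0,1,0,0,1,1,0,1,0;
         0,0,0,1,0,1,1,1,1,0; 0,0,0,0,1,0,1,0,0,1]

/-- `E_5 = M[I_5 | D']`. -/
noncomputable def E5 : Matroid (Fin 10) :=
  mOf !![1,0,0,0,0,0,1,1,1,1; 0,1,0,0,0,1,0,1,1,1; 0,0,1,0,0,1,1,0,1,0;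
         0,0,0,1,0,1,1,1,1,0; 0,0,0,0,1,1,0,1,0,0]

/-- `T_12 = M[I_6 | D'']`. -/
noncomputable def T12 : Matroid (Fin 12) :=
  mOf !![1,0,0,0,0,0,1,1,0,0,0,1; 0,1,0,0,0,0,1,0,0,0,1,1; 0,0,1,0,0,0,0,0,0,1,1,1;
         0,0,0,1,0,0,0,0,1,1,1,0; 0,0,0,0,1,0,0,1,1,1,0,0; 0,0,0,0,0,1,1,1,1,0,0,0]

/-- The cycle matroid `M(K_{3,3})` of the complete bipartite graph `K_{3,3}`, realised
as the GF(2) vector matroid of its vertex-edge incidence matrix (vertices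
`u_0,u_1,u_2,w_0,w_1,w_2`; the edge with index `3i+j` joins `u_i` to `w_j`). -/
noncomputable def MK33 : Matroid (Fin 9) :=
  mOf !![1,1,1,0,0,0,0,0,0; 0,0,0,1,1,1,0,0,0; 0,0,0,0,0,0,1,1,1;
         1,0,0,1,0,0,1,0,0; 0,1,0,0,1,0,0,1,0; 0,0,1,0,0,1,0,0,1]

/-- The cycle matroid `M(K_5)` of the complete graph `K_5`, realised as the GF(2)
vector matroid of its vertex-edge incidence matrix (vertices `0,…,4`, edges in the
order `01,02,03,04,12,13,14,23,24,34`). -/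
noncomputable def MK5 : Matroid (Fin 10) :=
  mOf !![1,1,1,1,0,0,0,0,0,0; 1,0,0,0,1,1,1,0,0,0; 0,1,0,0,1,0,0,1,1,0;
         0,0,1,0,0,1,0,1,0,1; 0,0,0,1,0,0,1,0,1,1]

/-- `Z_4`: the extension of `S_8` by the column `(1,1,1,0)`. -/
noncomputable def Z4 : Matroid (Fin 9) := extByCol S8mat ![1,1,1,0]

/-- `D_1`: the extension of `P_9` by the column `(1,1,1,0)`. -/
noncomputable def D1 : Matroid (Fin 10) := extByCol P9mat ![1,1,1,0]

/-- `D_3`: the extension of `P_9` by the column `(0,0,1,1)`. -/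
noncomputable def D3 : Matroid (Fin 10) := extByCol P9mat ![0,0,1,1]

/-! ### Auxiliary machinery for the self-duality proof -/

section SelfDualAux

/-- Decode a bitmask into a vector over `GF(2)`. -/
def decv (m : ℕ) : Fin 5 → ZMod 2 := fun i => if m.testBit i.val then 1 else 0

/-- The list of elements of `Fin 10` selected by a bitmask. -/
def selL (m : ℕ) : List (Fin 10) := (List.finRange 10).filter (fun i => m.testBit i.val)

/-- The finset of elements of `Fin 10` selected by a bitmask. -/
def selF (m : ℕ) : Finset (Fin 10) := (selL m).toFinset

/-- Boolean independence test for the columns (given as bitmasks via `c`) selected by `m`. -/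
def natIndep (c : Fin 10 → ℕ) (m : ℕ) : Bool :=
  ((selL m).map c).sublists.all fun l => l.isEmpty || (l.foldr (· ^^^ ·) 0 != 0)

/-- Boolean basis test. -/
def natBase (c : Fin 10 → ℕ) (m : ℕ) : Bool :=
  ((selL m).length == 5) && natIndep c m

/-- The bitmask of the complement of the image under `σ` of the set with bitmask `m`. -/
def cimg (σ : Equiv.Perm (Fin 10)) (m : ℕ) : ℕ :=
  (List.finRange 10).foldr
    (fun i a => if m.testBit ((σ.symm i).val) then a else a ||| (1 <<< i.val)) 0

lemma selL_nodup (m : ℕ) : (selL m).Nodup := (List.nodup_finRange 10).filter _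

lemma mem_selL {m : ℕ} {i : Fin 10} : i ∈ selL m ↔ m.testBit i.val = true := by
  simp [selL, List.mem_filter, List.mem_finRange]

lemma mem_selF {m : ℕ} {i : Fin 10} : i ∈ selF m ↔ m.testBit i.val = true := by
  rw [selF, List.mem_toFinset, mem_selL]

lemma selF_card (m : ℕ) : (selF m).card = (selL m).length :=
  List.toFinset_card_of_nodup (selL_nodup m)

lemma decv_zero : decv 0 = 0 := by
  funext i; simp [decv, Nat.zero_testBit]

lemma decv_xor (a b : ℕ) : decv (a ^^^ b) = decv a + decv b := by
  funext i
  simp only [decv, Nat.testBit_xor, Pi.add_apply]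
  cases ha : a.testBit i.val <;> cases hb : b.testBit i.val <;> simp <;> decide

lemma decv_eq_zero {m : ℕ} (hm : m < 32) (h : decv m = 0) : m = 0 := by
  apply Nat.zero_of_testBit_eq_false
  intro k
  by_cases hk : k < 5
  · have := congrFun h ⟨k, hk⟩
    simp only [decv, Pi.zero_apply] at this
    by_contra hbit
    rw [Bool.not_eq_false] at hbit
    rw [hbit, if_pos rfl] at this
    exact one_ne_zero this
  · have h25 : (32 : ℕ) ≤ 2 ^ k := by
      have h0 : (2 : ℕ) ^ 5 ≤ 2 ^ k := Nat.pow_le_pow_right (by omega) (by omega)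
      norm_num at h0
      omega
    exact Nat.testBit_eq_false_of_lt (lt_of_lt_of_le hm h25)

lemma xor_lt_32 {a b : ℕ} (ha : a < 32) (hb : b < 32) : a ^^^ b < 32 := by
  have : a ^^^ b < 2 ^ 5 := Nat.xor_lt_two_pow (by norm_num at *; omega) (by norm_num at *; omega)
  simpa using this

variable {φ : Fin 10 → Fin 5 → ZMod 2} {c : Fin 10 → ℕ}

lemma sum_map_eq_decv (hφ : ∀ j, φ j = decv (c j)) :
    ∀ l : List (Fin 10), (l.map φ).sum = decv ((l.map c).foldr (· ^^^ ·) 0)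
  | [] => by simp [decv_zero]
  | a :: l => by
    simp only [List.map_cons, List.sum_cons, List.foldr_cons]
    rw [decv_xor, hφ a, sum_map_eq_decv hφ l]

lemma foldr_xor_lt (hlt : ∀ j, c j < 32) :
    ∀ l : List (Fin 10), (l.map c).foldr (· ^^^ ·) 0 < 32
  | [] => by simp
  | a :: l => by
    simp only [List.map_cons, List.foldr_cons]
    exact xor_lt_32 (hlt a) (foldr_xor_lt hlt l)

lemma sum_map_ne_zero_iff (hφ : ∀ j, φ j = decv (c j)) (hlt : ∀ j, c j < 32)
    (l : List (Fin 10)) :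
    (l.map φ).sum ≠ 0 ↔ (l.map c).foldr (· ^^^ ·) 0 ≠ 0 := by
  rw [sum_map_eq_decv hφ]
  constructor
  · intro h h0; rw [h0, decv_zero] at h; exact h rfl
  · intro h h0; exact h (decv_eq_zero (foldr_xor_lt hlt l) h0)

end SelfDualAux

section SelfDualMatroid

variable (φ : Fin 10 → Fin 5 → ZMod 2)

lemma vm_E : (vecMatroid φ).E = Set.univ := rfl

lemma vm_indep (I : Set (Fin 10)) :
    (vecMatroid φ).Indep I ↔ LinearIndependent (ZMod 2) (I.restrict φ) := by
  simp [vecMatroid]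
  exact Iff.rfl

lemma li_iff_sums (I : Set (Fin 10)) :
    LinearIndependent (ZMod 2) (I.restrict φ) ↔
      ∀ s : Finset (Fin 10), ↑s ⊆ I → s.Nonempty → ∑ i ∈ s, φ i ≠ 0 := by
  classical
  constructor
  · intro h s hs hne hsum
    have hinj : Function.Injective (fun x : {x // x ∈ s} => (⟨x.1, hs x.2⟩ : I)) :=
      fun a b hab => Subtype.ext (congrArg Subtype.val hab :)
    have h1 := linearIndependent_iff'.mp h (s.attach.map ⟨_, hinj⟩) (fun _ => 1) ?_
    · obtain ⟨a, ha⟩ := hne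
      have hmem : (⟨a, hs ha⟩ : I) ∈ s.attach.map ⟨_, hinj⟩ :=
        Finset.mem_map.2 ⟨⟨a, ha⟩, Finset.mem_attach _ _, rfl⟩
      exact one_ne_zero (h1 _ hmem)
    · rw [Finset.sum_map]
      simp only [one_smul, Function.Embedding.coeFn_mk]
      calc ∑ x ∈ s.attach, (I.restrict φ) ⟨x.1, hs x.2⟩
          = ∑ x ∈ s.attach, φ x.1 := rfl
        _ = ∑ i ∈ s, φ i := Finset.sum_attach s φ
        _ = 0 := hsum
  · intro h
    rw [linearIndependent_iff']
    intro t g hsum i hit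
    by_contra hgi
    have h01 : ∀ x : ZMod 2, x ≠ 0 → x = 1 := by decide
    set s : Finset (Fin 10) := (t.filter fun j => g j ≠ 0).image Subtype.val with hsdef
    have hs : ↑s ⊆ I := by
      intro x hx
      simp only [hsdef, Finset.coe_image, Set.mem_image, Finset.mem_coe,
        Finset.mem_filter] at hx
      obtain ⟨y, _, rfl⟩ := hx
      exact y.2
    have hne : s.Nonempty :=
      ⟨i.1, Finset.mem_image.2 ⟨i, Finset.mem_filter.2 ⟨hit, hgi⟩, rfl⟩⟩
    refine h s hs hne ?_
    rw [hsdef, Finset.sum_image (fun a _ b _ hab => Subtype.ext hab)]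
    calc ∑ x ∈ t.filter fun j => g j ≠ 0, φ x.1
        = ∑ x ∈ t.filter fun j => g j ≠ 0, g x • (I.restrict φ) x := by
          refine Finset.sum_congr rfl fun x hx => ?_
          rw [h01 _ (Finset.mem_filter.mp hx).2, one_smul]; rfl
      _ = ∑ x ∈ t, g x • (I.restrict φ) x := by
          refine Finset.sum_filter_of_ne fun x _ hx0 => ?_
          intro hgx; exact hx0 (by rw [hgx, zero_smul])
      _ = 0 := hsum

lemma vm_indep_finset (s : Finset (Fin 10)) :
    (vecMatroid φ).Indep ↑s ↔
      ∀ t : Finset (Fin 10), t ⊆ s → t.Nonempty → ∑ i ∈ t, φ i ≠ 0 := by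
  rw [vm_indep, li_iff_sums]
  constructor
  · exact fun h t ht => h t (Finset.coe_subset.2 ht)
  · exact fun h t ht => h t (Finset.coe_subset.1 ht)

variable {c : Fin 10 → ℕ}

lemma indep_selF_iff (hφ : ∀ j, φ j = decv (c j)) (hlt : ∀ j, c j < 32) (m : ℕ) :
    (vecMatroid φ).Indep ↑(selF m) ↔ natIndep c m = true := by
  classical
  rw [vm_indep_finset]
  unfold natIndep
  rw [List.sublists_map, List.all_eq_true]
  constructor
  · intro h l hl
    simp only [List.mem_map, List.mem_sublists] at hl
    obtain ⟨lt, hlt', rfl⟩ := hl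
    have hnd : lt.Nodup := hlt'.nodup (selL_nodup m)
    rcases eq_or_ne lt [] with rfl | hne
    · simp
    · have hts : lt.toFinset ⊆ selF m := by
        intro x hx
        rw [List.mem_toFinset] at hx
        exact List.mem_toFinset.2 (hlt'.subset hx)
      have htn : lt.toFinset.Nonempty := by
        obtain ⟨x, hx⟩ := List.exists_mem_of_ne_nil lt hne
        exact ⟨x, List.mem_toFinset.2 hx⟩
      have hsum := h lt.toFinset hts htn
      rw [List.sum_toFinset _ hnd] at hsum
      have := (sum_map_ne_zero_iff hφ hlt lt).1 hsum
      simp only [Bool.or_eq_true, bne_iff_ne, ne_eq]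
      right; exact this
  · intro h t hts htn
    set lt : List (Fin 10) := (List.finRange 10).filter (fun i => decide (i ∈ t)) with hltdef
    have hsl : List.Sublist lt (selL m) := by
      apply List.monotone_filter_right
      intro a ha
      rw [decide_eq_true_eq] at ha
      exact mem_selF.1 (hts ha)
    have hmem : ∀ x, x ∈ lt ↔ x ∈ t := by
      intro x
      simp [hltdef, List.mem_filter, List.mem_finRange]
    have hnd : lt.Nodup := (List.nodup_finRange 10).filter _
    have hteq : lt.toFinset = t := by
      ext x; rw [List.mem_toFinset, hmem]
    have hne : lt ≠ [] := by
      obtain ⟨x, hx⟩ := htn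
      intro h0
      rw [← hmem] at hx
      simp [h0] at hx
    have := h (lt.map c) (List.mem_map.2 ⟨lt, List.mem_sublists.2 hsl, rfl⟩)
    simp only [Bool.or_eq_true, bne_iff_ne, ne_eq, List.isEmpty_iff] at this
    rcases this with h0 | hnz
    · exact absurd (List.map_eq_nil_iff.1 h0) hne
    · rw [← hteq, List.sum_toFinset _ hnd]
      exact (sum_map_ne_zero_iff hφ hlt lt).2 hnz

lemma vm_card_le {I : Set (Fin 10)} (h : (vecMatroid φ).Indep I) : I.ncard ≤ 5 := by
  classical
  have hli := (vm_indep φ I).mp h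
  haveI : Fintype ↥I := (Set.toFinite I).fintype
  have := hli.fintype_card_le_finrank
  rw [Module.finrank_fin_fun] at this
  rwa [Set.ncard_eq_toFinset_card', Set.toFinset_card]

lemma vm_base_iff {I0 : Set (Fin 10)} (hstd : (vecMatroid φ).Indep I0) (hstdc : I0.ncard = 5)
    (B : Set (Fin 10)) :
    (vecMatroid φ).IsBase B ↔ (vecMatroid φ).Indep B ∧ B.ncard = 5 := by
  obtain ⟨B0, hB0, hsub⟩ := hstd.exists_isBase_superset
  have hcard0 : B0.ncard = 5 := by
    have h2 := Set.ncard_le_ncard hsub (Set.toFinite B0)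
    have h3 := vm_card_le φ hB0.indep
    omega
  constructor
  · intro hB
    exact ⟨hB.indep, by rw [hB.ncard_eq_ncard_of_isBase hB0, hcard0]⟩
  · rintro ⟨hBi, hBc⟩
    obtain ⟨B', hB', hsub'⟩ := hBi.exists_isBase_superset
    have : B = B' := Set.eq_of_subset_of_ncard_le hsub'
      (by rw [hB'.ncard_eq_ncard_of_isBase hB0, hcard0, hBc]) (Set.toFinite B')
    rwa [this]

lemma selF_surj (s : Finset (Fin 10)) : ∃ m : ℕ, m < 1024 ∧ selF m = s := by
  classical
  have hinj : Function.Injective (fun m : Fin 1024 => selF m.val) := by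
    intro a b hab
    apply Fin.ext
    apply Nat.eq_of_testBit_eq
    intro k
    by_cases hk : k < 10
    · have hab' : selF a.val = selF b.val := hab
      have hm : (⟨k, hk⟩ : Fin 10) ∈ selF a.val ↔ (⟨k, hk⟩ : Fin 10) ∈ selF b.val := by
        rw [hab']
      rw [mem_selF, mem_selF] at hm
      cases hA : (a.val).testBit k <;> cases hB : (b.val).testBit k <;> simp_all
    · have h10 : (1024 : ℕ) ≤ 2 ^ k := by
        have h0 : (2 : ℕ) ^ 10 ≤ 2 ^ k := Nat.pow_le_pow_right (by omega) (by omega)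
        norm_num at h0
        omega
      have hA : (a.val).testBit k = false := Nat.testBit_eq_false_of_lt
        (lt_of_lt_of_le a.isLt h10)
      have hB : (b.val).testBit k = false := Nat.testBit_eq_false_of_lt
        (lt_of_lt_of_le b.isLt h10)
      rw [hA, hB]
  have hbij : Function.Bijective (fun m : Fin 1024 => selF m.val) := by
    rw [Fintype.bijective_iff_injective_and_card]
    refine ⟨hinj, ?_⟩
    rw [Fintype.card_fin, Fintype.card_finset, Fintype.card_fin]
    norm_num
  obtain ⟨m, hm⟩ := hbij.surjective s
  exact ⟨m.val, m.isLt, hm⟩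

end SelfDualMatroid

section SelfDualMain

variable {φ : Fin 10 → Fin 5 → ZMod 2} {c : Fin 10 → ℕ} {σ : Equiv.Perm (Fin 10)}

theorem vm_base_iff_natBase (hφ : ∀ j, φ j = decv (c j)) (hlt : ∀ j, c j < 32)
    (hstd : natIndep c 31 = true) (m : ℕ) :
    (vecMatroid φ).IsBase ↑(selF m) ↔ natBase c m = true := by
  have hlen31 : (selL 31).length = 5 := by decide
  have hstd' : (vecMatroid φ).Indep ↑(selF 31) := (indep_selF_iff φ hφ hlt 31).2 hstd
  have hstdc : (↑(selF 31) : Set (Fin 10)).ncard = 5 := by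
    rw [Set.ncard_coe_finset, selF_card, hlen31]
  rw [vm_base_iff φ hstd' hstdc, indep_selF_iff φ hφ hlt,
    Set.ncard_coe_finset, selF_card]
  unfold natBase
  rw [Bool.and_eq_true, beq_iff_eq]
  tauto

theorem vm_key (hφ : ∀ j, φ j = decv (c j)) (hlt : ∀ j, c j < 32)
    (hstd : natIndep c 31 = true)
    (hbit : ∀ m, m < 1024 → ∀ i : Fin 10,
      (cimg σ m).testBit i.val = !(m.testBit ((σ.symm i).val)))
    (hchk : ∀ m, m < 1024 → natBase c m = natBase c (cimg σ m))
    (B : Set (Fin 10)) :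
    (vecMatroid φ).IsBase B ↔ (vecMatroid φ).IsBase ((⇑σ '' B)ᶜ) := by
  classical
  obtain ⟨m, hm, hFs⟩ := selF_surj (Set.toFinite B).toFinset
  have hB : B = ↑(selF m) := by rw [hFs, Set.Finite.coe_toFinset]
  have himg : (⇑σ '' ↑(selF m))ᶜ = ↑(selF (cimg σ m)) := by
    ext i
    rw [Set.mem_compl_iff, Set.mem_image_equiv.not, Finset.mem_coe, Finset.mem_coe,
      mem_selF, mem_selF, hbit m hm i]
    cases h : m.testBit ((σ.symm i).val) <;> simp
  rw [hB, himg, vm_base_iff_natBase hφ hlt hstd, vm_base_iff_natBase hφ hlt hstd,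
    hchk m hm]

theorem vm_isIso_dual (hφ : ∀ j, φ j = decv (c j)) (hlt : ∀ j, c j < 32)
    (hstd : natIndep c 31 = true)
    (hbit : ∀ m, m < 1024 → ∀ i : Fin 10,
      (cimg σ m).testBit i.val = !(m.testBit ((σ.symm i).val)))
    (hchk : ∀ m, m < 1024 → natBase c m = natBase c (cimg σ m)) :
    IsIso (vecMatroid φ) ((vecMatroid φ)✶) := by
  have hkey := vm_key hφ hlt hstd hbit hchk
  refine ⟨⇑σ, ?_, ?_⟩
  · rw [Matroid.dual_ground]
    exact σ.bijective.bijOn_univ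
  · intro I _
    constructor
    · intro hI
      obtain ⟨B, hB, hIB⟩ := hI.exists_isBase_superset
      refine Matroid.dual_indep_iff_exists'.2 ⟨?_, (⇑σ '' B)ᶜ, (hkey B).1 hB, ?_⟩
      · exact Set.subset_univ _
      · exact Disjoint.mono_left (Set.image_mono hIB)
          (disjoint_compl_right : Disjoint (⇑σ '' B) (⇑σ '' B)ᶜ)
    · intro hI
      obtain ⟨-, B', hB', hdisj⟩ := Matroid.dual_indep_iff_exists'.1 hI
      have himg : ⇑σ '' (⇑σ ⁻¹' B'ᶜ) = B'ᶜ := Set.image_preimage_eq _ σ.surjective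
      have hBbase : (vecMatroid φ).IsBase (⇑σ ⁻¹' B'ᶜ) := by
        rw [hkey, himg, compl_compl]; exact hB'
      refine hBbase.indep.subset ?_
      intro x hx
      have : σ x ∉ B' := Set.disjoint_left.1 hdisj ⟨x, hx, rfl⟩
      exact this
end SelfDualMain


/-! ### Instantiation for `E4` and `E5` -/

def colsE4 : Fin 10 → ℕ := ![1,2,4,8,16,14,29,11,15,19]
def colsE5 : Fin 10 → ℕ := ![1,2,4,8,16,30,13,27,15,3]

def sigE4 : Equiv.Perm (Fin 10) :=
  ⟨![1,0,7,8,5,4,9,2,3,6], ![1,0,7,8,5,4,9,2,3,6], by decide, by decide⟩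
def sigE5 : Equiv.Perm (Fin 10) :=
  ⟨![2,7,0,9,6,8,4,1,5,3], ![2,7,0,9,6,8,4,1,5,3], by decide, by decide⟩

def phiE4 : Fin 10 → Fin 5 → ZMod 2 := fun j i =>
  !![1,0,0,0,0,0,1,1,1,1; 0,1,0,0,0,1,0,1,1,1; 0,0,1,0,0,1,1,0,1,0;
     0,0,0,1,0,1,1,1,1,0; 0,0,0,0,1,0,1,0,0,1] i j
def phiE5 : Fin 10 → Fin 5 → ZMod 2 := fun j i =>
  !![1,0,0,0,0,0,1,1,1,1; 0,1,0,0,0,1,0,1,1,1; 0,0,1,0,0,1,1,0,1,0;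
     0,0,0,1,0,1,1,1,1,0; 0,0,0,0,1,1,0,1,0,0] i j

set_option maxRecDepth 100000 in
lemma hphi4 : ∀ (j : Fin 10) (i : Fin 5), phiE4 j i = decv (colsE4 j) i := by decide
set_option maxRecDepth 100000 in
lemma hphi5 : ∀ (j : Fin 10) (i : Fin 5), phiE5 j i = decv (colsE5 j) i := by decide
lemma hlt4 : ∀ j, colsE4 j < 32 := by decide
lemma hlt5 : ∀ j, colsE5 j < 32 := by decide
set_option maxRecDepth 100000 in
lemma hstd4 : natIndep colsE4 31 = true := by decide
set_option maxRecDepth 100000 in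
lemma hstd5 : natIndep colsE5 31 = true := by decide

set_option maxRecDepth 1000000 in
lemma hbitB4 : ((List.range 1024).all fun m => (List.finRange 10).all fun i =>
    (cimg sigE4 m).testBit i.val == !(m.testBit ((sigE4.symm i).val))) = true := by decide
set_option maxRecDepth 1000000 in
lemma hbitB5 : ((List.range 1024).all fun m => (List.finRange 10).all fun i =>
    (cimg sigE5 m).testBit i.val == !(m.testBit ((sigE5.symm i).val))) = true := by decide
set_option maxRecDepth 1000000 in
lemma hchkB4 : ((List.range 1024).all fun m =>
    natBase colsE4 m == natBase colsE4 (cimg sigE4 m)) = true := by decide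
set_option maxRecDepth 1000000 in
lemma hchkB5 : ((List.range 1024).all fun m =>
    natBase colsE5 m == natBase colsE5 (cimg sigE5 m)) = true := by decide

lemma hbit_of_B {σ : Equiv.Perm (Fin 10)}
    (h : ((List.range 1024).all fun m => (List.finRange 10).all fun i =>
      (cimg σ m).testBit i.val == !(m.testBit ((σ.symm i).val))) = true) :
    ∀ m, m < 1024 → ∀ i : Fin 10,
      (cimg σ m).testBit i.val = !(m.testBit ((σ.symm i).val)) := by
  intro m hm i
  rw [List.all_eq_true] at h
  have h2 := h m (List.mem_range.2 hm)
  rw [List.all_eq_true] at h2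
  exact beq_iff_eq.1 (h2 i (List.mem_finRange i))

lemma hchk_of_B {c : Fin 10 → ℕ} {σ : Equiv.Perm (Fin 10)}
    (h : ((List.range 1024).all fun m =>
      natBase c m == natBase c (cimg σ m)) = true) :
    ∀ m, m < 1024 → natBase c m = natBase c (cimg σ m) := by
  intro m hm
  rw [List.all_eq_true] at h
  exact beq_iff_eq.1 (h m (List.mem_range.2 hm))


/-- The binary matroids `E_4` and `E_5` are self-dual. -/
theorem E4_E5_self_dual : IsIso E4 (E4✶) ∧ IsIso E5 (E5✶) := by
  constructor
  · have h : E4 = vecMatroid phiE4 := rfl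
    rw [h]
    exact vm_isIso_dual (c := colsE4) (σ := sigE4)
      (fun j => funext (hphi4 j)) hlt4 hstd4 (hbit_of_B hbitB4) (hchk_of_B hchkB4)
  · have h : E5 = vecMatroid phiE5 := rfl
    rw [h]
    exact vm_isIso_dual (c := colsE5) (σ := sigE5)
      (fun j => funext (hphi5 j)) hlt5 hstd5 (hbit_of_B hbitB5) (hchk_of_B hchkB5)

end PaperMatroid
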